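/- Let U : ℝ → (-∞,∞] be even with U(x) = ∞ for x > 1, U(x) ≤ U(y) for 0 ≤ x ≤ y, and U finite on a set of positive measure in [0,1]. Fix a real number c and an integer d ≥ 1, and real numbers y_1, ..., y_d with |y_i - c| ≤ 5/4 for all i and min_i y_i ≥ c - 1/8. Fix 0 < ε ≤ 1/8 and suppose y_1 = c (the edge endpoint). Then ∫_{[1-ε,1]} exp(-∑_{i=1}^d U(y_i - (c+t))) dt ≤ 8ε · exp(-U(1-ε) + U(0) + d(U(3/4) - U(0))) · ∫_{[1/2, 3/4-ε]} exp(-∑_{i=1}^d U(y_i - (c+t))) dt. -/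

import Mathlib

/-!
On `[1 - ε, 1]` the edge term is `U(-t) ≥ U(1 - ε)` and every other term is `≥ U 0`, so the
integrand is at most `exp(-U(1 - ε) - (d - 1) U 0)`. On `[1/2, 5/8] ⊆ [1/2, 3/4 - ε]` the bounds
`c - 1/8 ≤ y i ≤ c + 5/4` give `|y i - (c + t)| ≤ 3/4`, so the integrand is at least
`exp(-d U(3/4))`. Comparing the two constant bounds times the lengths `ε` and `1/8` gives the
claim; if `U(1 - ε) = ∞` the left integral vanishes.
-/

open MeasureTheory

/-- `eexp x = e^x` as a map `EReal → ℝ≥0∞`, with `e^{-∞} = 0` and `e^{∞} = ∞`. -/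
noncomputable def eexp (x : EReal) : ENNReal :=
  if x = ⊥ then 0 else if x = ⊤ then ⊤ else ENNReal.ofReal (Real.exp x.toReal)

open Finset

namespace EReal

lemma coe_finset_sum {ι : Type*} (s : Finset ι) (g : ι → ℝ) :
    ((∑ i ∈ s, g i : ℝ) : EReal) = ∑ i ∈ s, (g i : EReal) :=
  map_sum ({ toFun := (↑), map_zero' := coe_zero, map_add' := coe_add } : ℝ →+ EReal) g s

lemma sum_eq_top_of_eq_top {ι : Type*} [DecidableEq ι] {s : Finset ι} {f : ι → EReal} {i : ι}
    (hbot : ∀ j ∈ s, f j ≠ ⊥) (hi : i ∈ s) (htop : f i = ⊤) : ∑ j ∈ s, f j = ⊤ := by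
  rw [← add_sum_erase s f hi, htop]
  exact top_add_of_ne_bot <| sum_induction f (· ≠ ⊥)
    (fun _ _ ha hb => add_ne_bot_iff.mpr ⟨ha, hb⟩) zero_ne_bot
    fun j hj => hbot j (mem_of_mem_erase hj)

end EReal

@[simp]
lemma eexp_coe (x : ℝ) : eexp x = ENNReal.ofReal (Real.exp x) := by
  simp [eexp]

@[simp]
lemma eexp_bot : eexp ⊥ = 0 := by
  simp [eexp]

lemma eexp_monotone : Monotone eexp := by
  intro a b h
  rcases eq_or_ne a ⊥ with ha | ha
  · simp [ha]
  rcases eq_or_ne b ⊤ with hb | hb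
  · simp [hb, eexp]
  have hb' : b ≠ ⊥ := ne_bot_of_le_ne_bot ha h
  have ha' : a ≠ ⊤ := ne_top_of_le_ne_top hb h
  simp only [eexp, if_neg ha, if_neg ha', if_neg hb, if_neg hb']
  exact ENNReal.ofReal_le_ofReal (Real.exp_le_exp.mpr (EReal.toReal_le_toReal h ha hb))

lemma eexp_neg_sum_le {ι : Type*} {s : Finset ι} {f : ι → EReal} {g : ι → ℝ}
    (h : ∀ i ∈ s, (g i : EReal) ≤ f i) :
    eexp (-∑ i ∈ s, f i) ≤ ENNReal.ofReal (Real.exp (-∑ i ∈ s, g i)) := by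
  have hsum : ((∑ i ∈ s, g i : ℝ) : EReal) ≤ ∑ i ∈ s, f i := by
    rw [EReal.coe_finset_sum]
    exact sum_le_sum h
  have := eexp_monotone (EReal.neg_le_neg_iff.mpr hsum)
  rwa [← EReal.coe_neg, eexp_coe] at this

lemma ofReal_exp_neg_sum_le_eexp {ι : Type*} {s : Finset ι} {f : ι → EReal} {g : ι → ℝ}
    (h : ∀ i ∈ s, f i ≤ g i) :
    ENNReal.ofReal (Real.exp (-∑ i ∈ s, g i)) ≤ eexp (-∑ i ∈ s, f i) := by
  have hsum : ∑ i ∈ s, f i ≤ ((∑ i ∈ s, g i : ℝ) : EReal) := by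
    rw [EReal.coe_finset_sum]
    exact sum_le_sum h
  have := eexp_monotone (EReal.neg_le_neg_iff.mpr hsum)
  rwa [← EReal.coe_neg, eexp_coe] at this

lemma setLIntegral_Icc_le_of_forall_le {f : ℝ → ENNReal} {a b : ℝ} {C : ENNReal}
    (h : ∀ t ∈ Set.Icc a b, f t ≤ C) :
    ∫⁻ t in Set.Icc a b, f t ≤ C * ENNReal.ofReal (b - a) := by
  calc ∫⁻ t in Set.Icc a b, f t ≤ ∫⁻ _ in Set.Icc a b, C := setLIntegral_mono' measurableSet_Icc h
    _ = C * ENNReal.ofReal (b - a) := by rw [setLIntegral_const, Real.volume_Icc]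

lemma le_setLIntegral_Icc_of_forall_le {f : ℝ → ENNReal} {a b : ℝ} {C : ENNReal}
    (h : ∀ t ∈ Set.Icc a b, C ≤ f t) :
    C * ENNReal.ofReal (b - a) ≤ ∫⁻ t in Set.Icc a b, f t := by
  calc C * ENNReal.ofReal (b - a) = ∫⁻ _ in Set.Icc a b, C := by
        rw [setLIntegral_const, Real.volume_Icc]
    _ ≤ ∫⁻ t in Set.Icc a b, f t := setLIntegral_mono' measurableSet_Icc h

lemma apply_le_apply_of_abs_le {U : ℝ → EReal} (heven : ∀ x, U (-x) = U x)
    (hmono : ∀ x y : ℝ, 0 ≤ x → x ≤ y → U x ≤ U y) {x y : ℝ} (h : |x| ≤ |y|) : U x ≤ U y := by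
  have habs (z : ℝ) : U |z| = U z := by
    rcases abs_choice z with hz | hz <;> rw [hz]
    exact heven z
  rw [← habs x, ← habs y]
  exact hmono _ _ (abs_nonneg x) h

section Integrand

variable {ι : Type*} {U : ℝ → EReal} {y : ι → ℝ} {c ε : ℝ} {i₀ : ι}

lemma edge_le_apply (heven : ∀ x, U (-x) = U x) (hmono : ∀ x y : ℝ, 0 ≤ x → x ≤ y → U x ≤ U y)
    (hedge : y i₀ = c) (hε : ε ≤ 1) {t : ℝ} (ht : t ∈ Set.Icc (1 - ε) 1) :
    U (1 - ε) ≤ U (y i₀ - (c + t)) := by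
  refine apply_le_apply_of_abs_le heven hmono ?_
  rw [hedge, sub_add_cancel_left, abs_neg, abs_of_nonneg (by linarith),
    abs_of_nonneg (by linarith [ht.1])]
  exact ht.1

lemma lintegral_Icc_one_sub_eq_zero [Fintype ι] (hbot : ∀ x, U x ≠ ⊥) (heven : ∀ x, U (-x) = U x)
    (hmono : ∀ x y : ℝ, 0 ≤ x → x ≤ y → U x ≤ U y) (hedge : y i₀ = c) (hε : ε ≤ 1)
    (htop : U (1 - ε) = ⊤) :
    ∫⁻ t in Set.Icc (1 - ε) 1, eexp (-∑ i, U (y i - (c + t))) = 0 := by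
  classical
  refine le_antisymm ((setLIntegral_Icc_le_of_forall_le (C := 0) fun t ht => ?_).trans_eq
    (zero_mul _)) bot_le
  have hedge_top : U (y i₀ - (c + t)) = ⊤ :=
    top_le_iff.mp (htop ▸ edge_le_apply heven hmono hedge hε ht)
  rw [EReal.sum_eq_top_of_eq_top (f := fun i => U (y i - (c + t))) (fun i _ => hbot _)
    (mem_univ i₀) hedge_top]
  simp

lemma lintegral_Icc_one_sub_le [Fintype ι] (heven : ∀ x, U (-x) = U x)
    (hmono : ∀ x y : ℝ, 0 ≤ x → x ≤ y → U x ≤ U y) (hedge : y i₀ = c) (hε : ε ≤ 1)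
    {u₀ u₁ : ℝ} (hu₀ : U 0 = u₀) (hu₁ : U (1 - ε) = u₁) :
    ∫⁻ t in Set.Icc (1 - ε) 1, eexp (-∑ i, U (y i - (c + t)))
      ≤ ENNReal.ofReal (Real.exp (-(u₁ - u₀ + Fintype.card ι * u₀))) * ENNReal.ofReal ε := by
  classical
  have hsum : ∑ i, (u₀ + (Pi.single i₀ (u₁ - u₀) : ι → ℝ) i) = u₁ - u₀ + Fintype.card ι * u₀ := by
    simp [sum_add_distrib, add_comm]
  refine (setLIntegral_Icc_le_of_forall_le fun t ht => eexp_neg_sum_le fun i _ => ?_).trans_eq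
    (by rw [sub_sub_cancel, hsum])
  rcases eq_or_ne i i₀ with rfl | hi
  · simpa [← hu₁] using edge_le_apply heven hmono hedge hε ht
  · simpa [hi, ← hu₀] using apply_le_apply_of_abs_le heven hmono (abs_zero.trans_le (abs_nonneg _))

lemma le_lintegral_Icc_half [Fintype ι] (heven : ∀ x, U (-x) = U x)
    (hmono : ∀ x y : ℝ, 0 ≤ x → x ≤ y → U x ≤ U y) (hy : ∀ i, y i ≤ c + 5/4)
    (hymin : ∀ i, c - 1/8 ≤ y i) (hε : ε ≤ 1/8) {u : ℝ} (hu : U (3/4) = u) :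
    ENNReal.ofReal (Real.exp (-(Fintype.card ι * u))) * ENNReal.ofReal (1/8)
      ≤ ∫⁻ t in Set.Icc (1/2) (3/4 - ε), eexp (-∑ i, U (y i - (c + t))) := by
  have hsum : ∑ _i : ι, u = Fintype.card ι * u := by simp
  calc ENNReal.ofReal (Real.exp (-(Fintype.card ι * u))) * ENNReal.ofReal (1/8)
      ≤ ∫⁻ t in Set.Icc (1/2) (5/8), eexp (-∑ i, U (y i - (c + t))) := by
        rw [← hsum, show (1/8 : ℝ) = 5/8 - 1/2 by norm_num]
        refine le_setLIntegral_Icc_of_forall_le fun t ht => ofReal_exp_neg_sum_le_eexp fun i _ => ?_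
        rw [← hu]
        refine apply_le_apply_of_abs_le heven hmono ?_
        rw [abs_of_pos (by norm_num : (0 : ℝ) < 3/4), abs_le]
        constructor <;> linarith [hy i, hymin i, ht.1, ht.2]
    _ ≤ ∫⁻ t in Set.Icc (1/2) (3/4 - ε), eexp (-∑ i, U (y i - (c + t))) :=
        lintegral_mono_set (Set.Icc_subset_Icc le_rfl (by linarith))

end Integrand

/-- Integral comparison at the heart of the bound on the probability that an
unlocked edge has an extremal gradient. -/
theorem unlocked_extremal_integral_bound
    (U : ℝ → EReal) (hbot : ∀ x, U x ≠ ⊥) (heven : ∀ x, U (-x) = U x)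
    (hmono : ∀ x y : ℝ, 0 ≤ x → x ≤ y → U x ≤ U y)
    (c : ℝ) (d : ℕ) (hd : 1 ≤ d) (y : Fin d → ℝ)
    (hy : ∀ i, |y i - c| ≤ 5/4) (hymin : ∀ i, c - 1/8 ≤ y i)
    (ε : ℝ) (hε : ε ≤ 1/8)
    (hedge : y ⟨0, by omega⟩ = c) :
    ∫⁻ t in Set.Icc (1 - ε) 1, eexp (-(∑ i : Fin d, U (y i - (c + t))))
      ≤ ENNReal.ofReal (8 * ε)
          * eexp (-(U (1 - ε)) + U 0 + (d : EReal) * (U (3/4) - U 0))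
          * ∫⁻ t in Set.Icc (1/2) (3/4 - ε),
              eexp (-(∑ i : Fin d, U (y i - (c + t)))) := by
  rcases eq_or_ne (U (1 - ε)) ⊤ with htop | hfin
  · rw [lintegral_Icc_one_sub_eq_zero hbot heven hmono hedge (by linarith) htop]
    exact bot_le
  have lift (x : ℝ) (hx : U x ≤ U (1 - ε)) : ∃ u : ℝ, U x = u :=
    ⟨_, (EReal.coe_toReal (ne_top_of_le_ne_top hfin hx) (hbot x)).symm⟩
  obtain ⟨u₀, hu₀⟩ := lift 0 (apply_le_apply_of_abs_le heven hmono (by simp))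
  obtain ⟨u₁, hu₁⟩ := lift (1 - ε) le_rfl
  obtain ⟨u₃, hu₃⟩ := lift (3/4) (hmono _ _ (by norm_num) (by linarith))
  have hmid : -(U (1 - ε)) + U 0 + (d : EReal) * (U (3/4) - U 0)
      = ((-u₁ + u₀ + d * (u₃ - u₀) : ℝ) : EReal) := by
    rw [hu₀, hu₁, hu₃, ← EReal.coe_coe_eq_natCast]
    norm_cast
  have hexp : ENNReal.ofReal (Real.exp (-(u₁ - u₀ + d * u₀))) * ENNReal.ofReal ε
      = ENNReal.ofReal (8 * ε) * ENNReal.ofReal (Real.exp (-u₁ + u₀ + d * (u₃ - u₀)))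
        * (ENNReal.ofReal (Real.exp (-(d * u₃))) * ENNReal.ofReal (1/8)) := by
    rw [← ENNReal.ofReal_mul (by positivity), ← ENNReal.ofReal_mul' (by positivity),
      ← ENNReal.ofReal_mul (by positivity), ← ENNReal.ofReal_mul' (by positivity)]
    congr 1
    rw [show -(u₁ - u₀ + d * u₀) = (-u₁ + u₀ + d * (u₃ - u₀)) + -(d * u₃) by ring, Real.exp_add]
    ring
  calc ∫⁻ t in Set.Icc (1 - ε) 1, eexp (-(∑ i : Fin d, U (y i - (c + t))))
      ≤ ENNReal.ofReal (Real.exp (-(u₁ - u₀ + d * u₀))) * ENNReal.ofReal ε := by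
        simpa using lintegral_Icc_one_sub_le heven hmono hedge (by linarith) hu₀ hu₁
    _ ≤ _ := by
        rw [hexp, hmid, eexp_coe]
        gcongr
        simpa using le_lintegral_Icc_half heven hmono (fun i => by linarith [(abs_le.mp (hy i)).2])
          hymin hε hu₃
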